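/- arXiv:1907.12851 — 4 statements merged into one kernel-verified Lean document; each statement's English description precedes it below -/
import Mathlib

section
/- For every natural number n ≥ 1, 1 − (Nat.choose (2n−2) n) / (Nat.choose (2n−1) n) = n/(2n−1) as rational numbers, and the sequence n/(2n−1) tends to 1/2 as n → ∞. (This is the paper's Lemma 2: under bootstrap resampling with replacement without ordering — i.e., choosing a uniformly random multiset of size n from n observations — the probability that a fixed observation appears in the bootstrap replicate equals n/(2n−1) ≅ 1/2, since there are C(2n−1, n) multisets of size n from n types and C(2n−2, n) of them avoid the fixed observation.) -/
open Filter

/-- Among the `C(a + 1, k)` size-`k` multisets over `t` types (`a = t + k - 2`), `C(a, k)` avoid a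
fixed type, so this is the probability that a uniformly random one contains it. -/
theorem one_sub_choose_div_choose_succ {a k : ℕ} (hk : k ≤ a + 1) :
    1 - (a.choose k : ℚ) / ((a + 1).choose k : ℚ) = k / (a + 1) := by
  have hpos : ((a + 1).choose k : ℚ) ≠ 0 := by exact_mod_cast (Nat.choose_pos hk).ne'
  have hsucc : (a.choose k : ℚ) * (a + 1) = (a + 1).choose k * (a + 1 - k) := by
    exact_mod_cast Nat.choose_mul_succ_eq a k
  field_simp
  linear_combination -hsucc

theorem tendsto_natCast_div_two_mul_sub_one :
    Tendsto (fun n : ℕ => (n : ℝ) / (2 * n - 1)) atTop (nhds (1 / 2)) := by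
  simpa [sub_eq_neg_add] using
    tendsto_add_mul_div_add_mul_atTop_nhds (0 : ℝ) (-1) 1 (d := 2) two_ne_zero

/-- Under bootstrap resampling with replacement without ordering (a uniformly random
multiset of size `n` from `n` observations), the probability that a fixed observation
appears in the replicate is `1 − C(2n−2, n)/C(2n−1, n) = n/(2n−1)`, which tends to
`1/2` as `n → ∞`. -/
theorem bootstrap_without_ordering_half :
    (∀ n : ℕ, 1 ≤ n →
      (1 : ℚ) - (Nat.choose (2*n - 2) n : ℚ) / (Nat.choose (2*n - 1) n : ℚ)
        = (n : ℚ) / (2*n - 1)) ∧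
    Tendsto (fun n : ℕ => (n : ℝ) / (2*n - 1)) atTop (nhds (1/2)) := by
  refine ⟨fun n hn => ?_, tendsto_natCast_div_two_mul_sub_one⟩
  obtain ⟨m, rfl⟩ := Nat.exists_eq_add_of_le' hn
  have hsub : 2 * (m + 1) - 1 = 2 * m + 1 := by omega
  rw [show 2 * (m + 1) - 2 = 2 * m by omega, hsub,
    one_sub_choose_div_choose_succ (by omega)]
  push_cast
  ring
end

section
/- Let μ and ν be probability measures on ℝ, and let X : Fin n₁ → Ω → ℝ and Y : Fin n₂ → Ω → ℝ be random variables on a probability space Ω such that the joint family (X_1,…,X_{n₁},Y_1,…,Y_{n₂}) is independent, each X_i has law μ, and each Y_j has law ν. Then the Mann–Whitney statistic Û = (1/(n₁n₂)) Σ_i Σ_j ψ(X_i, Y_j) satisfies E[Û] = ∫∫ ψ(x,y) d(μ.prod ν)(x,y) = (μ.prod ν){(x,y) : y < x} + (1/2)·(μ.prod ν){(x,y) : x = y}. (This is the unbiasedness of the Mann–Whitney statistic as an estimator of the population AUC Pr[h(X)|ω₂ < h(X)|ω₁].) -/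
/-! Each term `ψ(Xᵢ, Yⱼ)` has expectation `∫ ψ d(μ × ν)`, because independence makes the law of
`(Xᵢ, Yⱼ)` the product measure; averaging over the `n₁ n₂` pairs keeps that value. Splitting `ψ`
as `1_{y < x} + ½ 1_{x = y}` evaluates the integral. -/

open MeasureTheory ProbabilityTheory Finset

/-- The Mann–Whitney kernel. -/
noncomputable def psi (a b : ℝ) : ℝ := if a > b then 1 else if a = b then 1/2 else 0

lemma measurable_psi : Measurable fun p : ℝ × ℝ => psi p.1 p.2 :=
  Measurable.ite (measurableSet_lt measurable_snd measurable_fst) measurable_const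
    (Measurable.ite (measurableSet_eq_fun measurable_fst measurable_snd) measurable_const
      measurable_const)

lemma norm_psi_le_one (a b : ℝ) : ‖psi a b‖ ≤ 1 := by
  unfold psi
  split_ifs <;> norm_num

lemma psi_eq_indicator_add_indicator (p : ℝ × ℝ) :
    psi p.1 p.2 = {q : ℝ × ℝ | q.2 < q.1}.indicator 1 p
      + {q : ℝ × ℝ | q.1 = q.2}.indicator (fun _ => 1 / 2) p := by
  unfold psi
  rcases lt_trichotomy p.2 p.1 with h | h | h
  · simp [h, h.ne']
  · simp [h]
  · simp [h.ne, h.not_gt]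

lemma integral_psi {ρ : Measure (ℝ × ℝ)} [IsFiniteMeasure ρ] :
    ∫ p, psi p.1 p.2 ∂ρ
      = (ρ {p | p.2 < p.1}).toReal + 1 / 2 * (ρ {p | p.1 = p.2}).toReal := by
  have hlt : MeasurableSet {q : ℝ × ℝ | q.2 < q.1} :=
    measurableSet_lt measurable_snd measurable_fst
  have heq : MeasurableSet {q : ℝ × ℝ | q.1 = q.2} :=
    measurableSet_eq_fun measurable_fst measurable_snd
  simp_rw [psi_eq_indicator_add_indicator]
  rw [integral_add ((integrable_const 1).indicator hlt) ((integrable_const _).indicator heq),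
    Pi.one_def, integral_indicator_const _ hlt, integral_indicator_const _ heq]
  simp [Measure.real, mul_comm]

section Probability

variable {Ω : Type*} [MeasurableSpace Ω] {P : Measure Ω}

theorem ProbabilityTheory.IndepFun.integral_comp_prodMk {α β E : Type*} [MeasurableSpace α]
    [MeasurableSpace β] [NormedAddCommGroup E] [NormedSpace ℝ E] [IsFiniteMeasure P]
    {X : Ω → α} {Y : Ω → β} {μ : Measure α} {ν : Measure β} (hXY : IndepFun X Y P)
    (hmX : AEMeasurable X P) (hmY : AEMeasurable Y P) (hX : P.map X = μ) (hY : P.map Y = ν)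
    {f : α × β → E} (hf : AEStronglyMeasurable f (μ.prod ν)) :
    ∫ ω, f (X ω, Y ω) ∂P = ∫ p, f p ∂(μ.prod ν) := by
  have hlaw : P.map (fun ω => (X ω, Y ω)) = μ.prod ν := by
    rw [hXY.map_prod_eq_prod_map_map hmX hmY, hX, hY]
  rw [← hlaw] at hf ⊢
  exact (integral_map (hmX.prodMk hmY) hf).symm

theorem integral_average_eq_of_forall_integral_eq {ι κ : Type*} [Fintype ι] [Fintype κ]
    [Nonempty ι] [Nonempty κ] {f : ι → κ → Ω → ℝ} (hf : ∀ i j, Integrable (f i j) P) {c : ℝ}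
    (hc : ∀ i j, ∫ ω, f i j ω ∂P = c) :
    ∫ ω, 1 / ((Fintype.card ι : ℝ) * Fintype.card κ) * ∑ i, ∑ j, f i j ω ∂P = c := by
  rw [integral_const_mul,
    integral_finsetSum _ fun i _ => integrable_finsetSum _ fun j _ => hf i j]
  simp_rw [integral_finsetSum _ fun j _ => hf _ j, hc, sum_const, card_univ, nsmul_eq_mul]
  field_simp

end Probability

/-- Unbiasedness of the Mann–Whitney statistic: if `X₁,…,X_{n₁},Y₁,…,Y_{n₂}` are
jointly independent with the `Xᵢ` distributed as `μ` and the `Yⱼ` as `ν`, then the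
expectation of the Mann–Whitney statistic equals `∫∫ ψ d(μ × ν)`, which equals
`Pr[Y < X] + (1/2)·Pr[X = Y]` (the population AUC). -/
theorem mann_whitney_unbiased {Ω : Type*} [MeasurableSpace Ω]
    (P : Measure Ω) [IsProbabilityMeasure P]
    (μ ν : Measure ℝ) [IsProbabilityMeasure μ] [IsProbabilityMeasure ν]
    (n₁ n₂ : ℕ) (h₁ : 1 ≤ n₁) (h₂ : 1 ≤ n₂)
    (X : Fin n₁ → Ω → ℝ) (Y : Fin n₂ → Ω → ℝ)
    (hmX : ∀ i, Measurable (X i)) (hmY : ∀ j, Measurable (Y j))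
    (hindep : iIndepFun
      (Sum.elim X Y) P)
    (hX : ∀ i, Measure.map (X i) P = μ) (hY : ∀ j, Measure.map (Y j) P = ν) :
    ∫ ω, (1 / ((n₁ : ℝ) * n₂)) * ∑ i : Fin n₁, ∑ j : Fin n₂, psi (X i ω) (Y j ω) ∂P
        = ∫ p : ℝ × ℝ, psi p.1 p.2 ∂(μ.prod ν) ∧
      ∫ p : ℝ × ℝ, psi p.1 p.2 ∂(μ.prod ν)
        = ((μ.prod ν) {p : ℝ × ℝ | p.2 < p.1}).toReal
            + (1/2) * ((μ.prod ν) {p : ℝ × ℝ | p.1 = p.2}).toReal := by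
  refine ⟨?_, integral_psi⟩
  have : Nonempty (Fin n₁) := ⟨⟨0, h₁⟩⟩
  have : Nonempty (Fin n₂) := ⟨⟨0, h₂⟩⟩
  have hterm (i : Fin n₁) (j : Fin n₂) :
      ∫ ω, psi (X i ω) (Y j ω) ∂P = ∫ p, psi p.1 p.2 ∂(μ.prod ν) :=
    (hindep.indepFun (i := .inl i) (j := .inr j) Sum.inl_ne_inr).integral_comp_prodMk
      (hmX i).aemeasurable (hmY j).aemeasurable (hX i) (hY j)
      measurable_psi.aestronglyMeasurable
  have hint (i : Fin n₁) (j : Fin n₂) : Integrable (fun ω => psi (X i ω) (Y j ω)) P :=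
    (integrable_const 1).mono' (measurable_psi.comp ((hmX i).prodMk (hmY j))).aestronglyMeasurable
      (.of_forall fun _ => norm_psi_le_one _ _)
  simpa using integral_average_eq_of_forall_integral_eq hint hterm
end

section
/- Let n ≥ 1, let α : Fin n → ℝ, let ᾱ = (1/n) Σ_i α i, and let μ ∈ ℝ. If f is drawn uniformly at random from all functions Fin n → Fin n (an ordered bootstrap replicate) and s*(f) = μ + (1/n) Σ_{k : Fin n} α (f k) is the linear statistic evaluated on the bootstrap replicate, then the variance of s*(f) equals (1/n²) Σ_i (α i − ᾱ)². (This is the ideal bootstrap variance of a linear statistic.) -/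
/-!
With `β = α - ᾱ` we have `∑ β = 0` and `s f - s̄ = (1/n) ∑ₖ β (f k)`. Splitting `f` as
`(f k, f|_{≠ k})` shows that the coordinates of a uniform `f` are independent and uniform, so
for `k ≠ l` the cross terms `β (f k) β (f l)` sum to a multiple of `∑ β = 0`. Only the `n`
diagonal terms survive, each averaging `(1/n) ∑ β²`.
-/

open Finset

section

variable {ι κ : Type*} [Fintype ι] [DecidableEq ι] [Fintype κ]

theorem sum_comp_eval {M : Type*} [AddCommMonoid M] (k : ι) (φ : κ → M) :
    ∑ f : ι → κ, φ (f k) = Fintype.card κ ^ (Fintype.card ι - 1) • ∑ j, φ j := by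
  rw [Fintype.sum_equiv (Equiv.funSplitAt k κ) (fun f => φ (f k)) (fun p => φ p.1)
    fun _ => rfl, Fintype.sum_prod_type]
  simp [Finset.smul_sum]

theorem sum_comp_eval_mul_restrict {R : Type*} [NonUnitalNonAssocSemiring R] (k : ι)
    (φ : κ → R) (G : ({i // i ≠ k} → κ) → R) :
    ∑ f : ι → κ, φ (f k) * G (fun i => f i) = (∑ j, φ j) * ∑ g, G g := by
  rw [Fintype.sum_equiv (Equiv.funSplitAt k κ) (fun f => φ (f k) * G (fun i => f i))
    (fun p => φ p.1 * G p.2) fun _ => rfl, Fintype.sum_prod_type, sum_mul_sum]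

theorem sum_sum_comp {R : Type*} [CommSemiring R] (β : κ → R) :
    ∑ f : ι → κ, ∑ i, β (f i)
      = Fintype.card ι * Fintype.card κ ^ (Fintype.card ι - 1) * ∑ j, β j := by
  rw [sum_comm]
  simp [sum_comp_eval, mul_assoc]

theorem sum_sq_sum_comp_of_sum_eq_zero {R : Type*} [CommSemiring R] {β : κ → R}
    (hβ : ∑ j, β j = 0) :
    ∑ f : ι → κ, (∑ i, β (f i)) ^ 2
      = Fintype.card ι * Fintype.card κ ^ (Fintype.card ι - 1) * ∑ j, β j ^ 2 := by
  have cross : ∀ i l : ι, l ≠ i → ∑ f : ι → κ, β (f i) * β (f l) = 0 := fun i l hli => by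
    simpa [hβ] using sum_comp_eval_mul_restrict i β (fun g => β (g ⟨l, hli⟩))
  calc ∑ f : ι → κ, (∑ i, β (f i)) ^ 2
      = ∑ i, ∑ l, ∑ f : ι → κ, β (f i) * β (f l) := by
        simp only [sq, sum_mul_sum]
        rw [sum_comm]
        exact sum_congr rfl fun _ _ => sum_comm
    _ = ∑ i : ι, ∑ f : ι → κ, β (f i) ^ 2 := by
        refine sum_congr rfl fun i _ => ?_
        rw [sum_eq_single i (fun l _ hli => cross i l hli) (by simp)]
        simp only [sq]
    _ = _ := by
        simp [sum_comp_eval _ fun j => β j ^ 2, mul_assoc]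

end

/-- The ideal bootstrap variance of a linear statistic
`s*(f) = μ + (1/n) Σ_k α(f k)`, where `f` is uniform over all `n^n` ordered
bootstrap replicates `Fin n → Fin n`, equals `(1/n²) Σᵢ (αᵢ − ᾱ)²`. -/
theorem bootstrap_variance_linear_statistic (n : ℕ) (hn : 1 ≤ n)
    (α : Fin n → ℝ) (μ : ℝ) (αbar : ℝ) (hαbar : αbar = (1 / (n : ℝ)) * ∑ i, α i)
    (s : (Fin n → Fin n) → ℝ)
    (hs : ∀ f : Fin n → Fin n, s f = μ + (1 / (n : ℝ)) * ∑ k : Fin n, α (f k))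
    (sbar : ℝ) (hsbar : sbar = (1 / (n : ℝ)^n) * ∑ f : Fin n → Fin n, s f) :
    (1 / (n : ℝ)^n) * ∑ f : Fin n → Fin n, (s f - sbar)^2
      = (1 / (n : ℝ)^2) * ∑ i : Fin n, (α i - αbar)^2 := by
  have hn0 : (n : ℝ) ≠ 0 := Nat.cast_ne_zero.2 (by omega)
  have hpow : (n : ℝ) ^ (n - 1) * n = (n : ℝ) ^ n := pow_sub_one_mul (by omega) _
  set β : Fin n → ℝ := fun i => α i - αbar
  have hβ : ∑ i, β i = 0 := by
    simp only [hαbar, one_div, sum_sub_distrib, sum_const, card_univ, Fintype.card_fin,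
      nsmul_eq_mul, β]
    field_simp
    ring
  have hs_centered : ∀ f, s f = (μ + αbar) + 1 / n * ∑ k, β (f k) := fun f => by
    simp only [hs, one_div, sum_sub_distrib, sum_const, card_univ, Fintype.card_fin,
      nsmul_eq_mul, β]
    field_simp
    ring
  have hsbar_eq : sbar = μ + αbar := by
    simp only [hsbar, one_div, hs_centered, sum_add_distrib, sum_const, card_univ,
      Fintype.card_pi, Fintype.card_fin, prod_const, nsmul_eq_mul, Nat.cast_pow,
      ← mul_sum, sum_sum_comp, hβ, mul_zero, add_zero]
    field_simp
  calc (1 / (n : ℝ) ^ n) * ∑ f : Fin n → Fin n, (s f - sbar) ^ 2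
      = 1 / (n : ℝ) ^ n * (1 / n) ^ 2 * ∑ f : Fin n → Fin n, (∑ k, β (f k)) ^ 2 := by
        rw [mul_assoc, mul_sum (s := univ) (a := (1 / n : ℝ) ^ 2)]
        refine congrArg _ (Fintype.sum_congr _ _ fun f => ?_)
        rw [hs_centered f, hsbar_eq]
        ring
    _ = (1 / (n : ℝ) ^ 2) * ∑ i : Fin n, (α i - αbar) ^ 2 := by
        rw [sum_sq_sum_comp_of_sum_eq_zero hβ]
        simp only [Fintype.card_fin]
        rw [mul_comm (n : ℝ), hpow]
        field_simp
        rfl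
end

section
/- Let n ≥ 2, let α : Fin n → ℝ, let ᾱ = (1/n) Σ_i α i, and let μ ∈ ℝ. For the linear statistic s, the jackknife replications are θ̂_(i) = μ + (1/(n−1)) Σ_{j ≠ i} α j, with average θ̂(·) = (1/n) Σ_i θ̂_(i). Then the squared jackknife estimate of standard error, ((n−1)/n) Σ_i (θ̂_(i) − θ̂(·))², equals (1/(n(n−1))) Σ_i (α i − ᾱ)². Consequently the ideal bootstrap variance of the linear statistic, (1/n²) Σ_i (α i − ᾱ)², equals ((n−1)/n) times the squared jackknife estimate of standard error; i.e., for linear statistics the bootstrap standard-error estimate is the jackknife estimate multiplied by √((n−1)/n). -/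
open Finset

/-
Deleting point `i` from a linear statistic gives `θ̂₍ᵢ₎ = μ + (S − αᵢ)/(n − 1)` with `S = Σⱼ αⱼ`,
an affine function of `αᵢ` with slope `−1/(n − 1)`. An affine change `y = c + k x` multiplies the
sum of squared deviations from the mean by `k²`, so the jackknife replications spread
`1/(n − 1)²` times as much as the `αᵢ`; both identities follow by clearing denominators.
-/

theorem sum_sq_sub_mean_of_affine {ι : Type*} [Fintype ι] {x y : ι → ℝ} (c k : ℝ)
    (h : ∀ i, y i = c + k * x i) :
    ∑ i, (y i - (1 / (Fintype.card ι : ℝ)) * ∑ j, y j) ^ 2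
      = k ^ 2 * ∑ i, (x i - (1 / (Fintype.card ι : ℝ)) * ∑ j, x j) ^ 2 := by
  cases isEmpty_or_nonempty ι
  · simp
  have hcard : (Fintype.card ι : ℝ) ≠ 0 := by positivity
  have hmean : (1 / (Fintype.card ι : ℝ)) * ∑ j, y j
      = c + k * ((1 / (Fintype.card ι : ℝ)) * ∑ j, x j) := by
    simp_rw [h]
    rw [sum_add_distrib, sum_const, card_univ, nsmul_eq_mul, ← mul_sum]
    field_simp
  rw [hmean]
  set xbar := (1 / (Fintype.card ι : ℝ)) * ∑ j, x j
  rw [mul_sum]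
  exact sum_congr rfl fun i _ => by rw [h i]; ring

theorem leave_one_out_mean_eq_affine {ι : Type*} [Fintype ι] [DecidableEq ι]
    (α : ι → ℝ) (μ m : ℝ) (i : ι) :
    μ + (1 / m) * ∑ j ∈ univ.erase i, α j = (μ + (1 / m) * ∑ j, α j) + -(1 / m) * α i := by
  rw [sum_erase_eq_sub (mem_univ i)]
  ring

/-- For a linear statistic with jackknife replications
`θ̂₍ᵢ₎ = μ + (1/(n−1)) Σ_{j ≠ i} αⱼ`, the squared jackknife estimate of standard
error equals `(1/(n(n−1))) Σᵢ (αᵢ − ᾱ)²`; consequently the ideal bootstrap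
variance `(1/n²) Σᵢ (αᵢ − ᾱ)²` is `((n−1)/n)` times the squared jackknife
estimate of standard error. -/
theorem jackknife_vs_bootstrap_linear (n : ℕ) (hn : 2 ≤ n)
    (α : Fin n → ℝ) (μ : ℝ) (αbar : ℝ) (hαbar : αbar = (1 / (n : ℝ)) * ∑ i, α i)
    (θ : Fin n → ℝ)
    (hθ : ∀ i : Fin n, θ i = μ + (1 / ((n : ℝ) - 1)) * ∑ j ∈ Finset.univ.erase i, α j)
    (θbar : ℝ) (hθbar : θbar = (1 / (n : ℝ)) * ∑ i, θ i) :
    (((n : ℝ) - 1) / n) * ∑ i : Fin n, (θ i - θbar)^2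
        = (1 / ((n : ℝ) * ((n : ℝ) - 1))) * ∑ i : Fin n, (α i - αbar)^2 ∧
    (1 / (n : ℝ)^2) * ∑ i : Fin n, (α i - αbar)^2
        = (((n : ℝ) - 1) / n) * ((((n : ℝ) - 1) / n) * ∑ i : Fin n, (θ i - θbar)^2) := by
  have hdev : ∑ i, (θ i - θbar) ^ 2 = (1 / ((n : ℝ) - 1)) ^ 2 * ∑ i, (α i - αbar) ^ 2 := by
    have h := sum_sq_sub_mean_of_affine _ _
      fun i => (hθ i).trans (leave_one_out_mean_eq_affine α μ _ i)
    rw [Fintype.card_fin, ← hθbar, ← hαbar, neg_sq] at h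
    exact h
  have hn1 : (n : ℝ) - 1 ≠ 0 := by
    have : (2 : ℝ) ≤ n := by exact_mod_cast hn
    linarith
  have hn0 : (n : ℝ) ≠ 0 := by positivity
  rw [hdev]
  constructor <;> field_simp
end
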